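/- Let (Ω, 𝔉) be a measurable space and θ : ℝ → Ω → Ω with (s,ω) ↦ θ_s ω jointly measurable. Let A be a real d×d matrix and λ < 0 with |exp(tA)_{ij}| ≤ e^{λt} for all t ≥ 0 and all i,j. Let N ∈ ℝ^d with 0 ≤ N, L ≥ 0 with Ld² < −λ, and let h : ℝ^d → ℝ^d be continuously differentiable with |∂h_i/∂x_j(x)| ≤ L for all x, i, j and with 0 ≤ h(x) ≤ N componentwise for all x. Let c : Ω → ℝ^d be measurable. Then there exists a unique measurable u : Ω → ℝ^d with 0 ≤ u(ω) ≤ N for all ω satisfying u(ω) = h( ∫_{−∞}^0 exp(−sA)·u(θ_s ω) ds + c(ω) ) for every ω ∈ Ω. -/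

import Mathlib

/-!
For the sup norm, the small-gain condition makes `u ↦ h(𝒦u + c)` a contraction: by the mean value
inequality `h` is `dL`-Lipschitz, and the kernel bound `|exp(tA)ᵢⱼ| ≤ e^{λt}` makes `𝒦` Lipschitz
with constant `d/(-λ)`, so the composite contracts by `Ld²/(-λ) < 1`. Measurable functions form a
closed, hence complete, subset of `ℓ^∞(Ω, ℝ^d)`, so Banach's fixed point theorem applies; a fixed
point takes values in `[0, N]` because `h` does.
-/

open MeasureTheory Set
open scoped ENNReal NNReal Matrix lp

theorem Matrix.continuous_exp {m : Type*} [Fintype m] [DecidableEq m] :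
    Continuous (NormedSpace.exp : Matrix m m ℝ → Matrix m m ℝ) := by
  let : NormedRing (Matrix m m ℝ) := Matrix.linftyOpNormedRing
  let : NormedAlgebra ℝ (Matrix m m ℝ) := Matrix.linftyOpNormedAlgebra
  let : NormedAlgebra ℚ (Matrix m m ℝ) := Matrix.linftyOpNormedAlgebra
  exact NormedSpace.exp_continuous

theorem Matrix.norm_mulVec_le_of_abs_le {m n : Type*} [Fintype m] [Fintype n]
    (M : Matrix m n ℝ) {C : ℝ} (hC : 0 ≤ C) (hM : ∀ i j, |M i j| ≤ C) (v : n → ℝ) :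
    ‖M *ᵥ v‖ ≤ Fintype.card n * C * ‖v‖ := by
  refine (pi_norm_le_iff_of_nonneg (by positivity)).2 fun i => ?_
  calc ‖(M *ᵥ v) i‖ = |∑ j, M i j * v j| := rfl
    _ ≤ ∑ j, |M i j| * ‖v j‖ := by
      simpa only [abs_mul, Real.norm_eq_abs] using
        Finset.abs_sum_le_sum_abs (fun j => M i j * v j) Finset.univ
    _ ≤ ∑ _j : n, C * ‖v‖ := Finset.sum_le_sum fun j _ =>
      mul_le_mul (hM i j) (norm_le_pi_norm v j) (norm_nonneg _) hC
    _ = Fintype.card n * C * ‖v‖ := by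
      rw [Finset.sum_const, Finset.card_univ, nsmul_eq_mul, mul_assoc]

theorem Measurable.matrix_mulVec {α m n R : Type*} [MeasurableSpace α] [Fintype n]
    [NonUnitalNonAssocSemiring R] [MeasurableSpace R] [MeasurableMul₂ R] [MeasurableAdd₂ R]
    {M : α → Matrix m n R} {v : α → n → R} (hM : ∀ i j, Measurable fun x => M x i j)
    (hv : Measurable v) : Measurable fun x => M x *ᵥ v x :=
  measurable_pi_iff.2 fun i => Finset.measurable_sum _ fun j _ =>
    (hM i j).mul ((measurable_pi_apply j).comp hv)

theorem ContinuousLinearMap.norm_le_of_abs_apply_single_le {m n : Type*} [Fintype m]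
    [DecidableEq m] [Fintype n] (f : (m → ℝ) →L[ℝ] n → ℝ) {C : ℝ} (hC : 0 ≤ C)
    (hf : ∀ i j, |f (Pi.single j 1) i| ≤ C) : ‖f‖ ≤ Fintype.card m * C :=
  f.opNorm_le_bound (by positivity) fun w => by
    simpa using (LinearMap.toMatrix' (f : (m → ℝ) →ₗ[ℝ] n → ℝ)).norm_mulVec_le_of_abs_le hC hf w

theorem norm_sub_le_of_abs_fderiv_apply_single_le {m n : Type*} [Fintype m] [DecidableEq m]
    [Fintype n] {h : (m → ℝ) → n → ℝ} (hh : Differentiable ℝ h) {L : ℝ} (hL : 0 ≤ L)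
    (hD : ∀ x i j, |fderiv ℝ h x (Pi.single j 1) i| ≤ L) (x y : m → ℝ) :
    ‖h x - h y‖ ≤ Fintype.card m * L * ‖x - y‖ :=
  convex_univ.norm_image_sub_le_of_norm_fderiv_le (fun z _ => hh z)
    (fun z _ => (fderiv ℝ h z).norm_le_of_abs_apply_single_le hL (hD z)) (mem_univ y) (mem_univ x)

theorem Pi.norm_le_norm_of_nonneg_of_le {ι : Type*} [Fintype ι] {x y : ι → ℝ} (hx : 0 ≤ x)
    (hxy : x ≤ y) : ‖x‖ ≤ ‖y‖ :=
  (pi_norm_le_iff_of_nonneg (norm_nonneg y)).2 fun i => (Real.norm_of_nonneg (hx i)).trans_le <|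
    (hxy i).trans <| (Real.le_norm_self _).trans (norm_le_pi_norm y i)

section IntegralIic

variable {E : Type*} [NormedAddCommGroup E] {f : ℝ → E} {b C : ℝ}

theorem integrableOn_Iic_of_norm_le_exp (hb : 0 < b)
    (hf : AEStronglyMeasurable f (volume.restrict (Iic 0)))
    (hfC : ∀ s ≤ 0, ‖f s‖ ≤ C * Real.exp (b * s)) : IntegrableOn f (Iic 0) :=
  ((integrableOn_exp_mul_Iic hb 0).const_mul C).mono' hf <|
    (ae_restrict_mem measurableSet_Iic).mono fun s hs => hfC s hs

theorem norm_setIntegral_Iic_le_of_norm_le_exp [NormedSpace ℝ E] (hb : 0 < b)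
    (hfC : ∀ s ≤ 0, ‖f s‖ ≤ C * Real.exp (b * s)) : ‖∫ s in Iic 0, f s‖ ≤ C / b :=
  calc ‖∫ s in Iic 0, f s‖ ≤ ∫ s in Iic 0, C * Real.exp (b * s) :=
        norm_integral_le_of_norm_le ((integrableOn_exp_mul_Iic hb 0).const_mul C) <|
          (ae_restrict_mem measurableSet_Iic).mono fun s hs => hfC s hs
    _ = C / b := by
      rw [integral_const_mul, integral_exp_mul_Iic hb, mul_zero, Real.exp_zero, mul_one_div]

end IntegralIic

section FlowIntegral

variable {Ω m n : Type*} [Fintype m] [Fintype n]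

/-- The paper's operator `𝒦` without its noise term `c`, for a general kernel `Φ` in place of
`s ↦ exp(-sA)`. -/
noncomputable def flowIntegral (Φ : ℝ → Matrix m n ℝ) (θ : ℝ → Ω → Ω) (u : Ω → n → ℝ) (ω : Ω) :
    m → ℝ :=
  ∫ s in Iic 0, Φ s *ᵥ u (θ s ω)

variable {Φ : ℝ → Matrix m n ℝ} {θ : ℝ → Ω → Ω} {u v : Ω → n → ℝ} {b C : ℝ}

theorem norm_mulVec_flow_le (hΦb : ∀ s ≤ 0, ∀ i j, |Φ s i j| ≤ Real.exp (b * s))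
    (huC : ∀ ω, ‖u ω‖ ≤ C) (ω : Ω) {s : ℝ} (hs : s ≤ 0) :
    ‖Φ s *ᵥ u (θ s ω)‖ ≤ Fintype.card n * C * Real.exp (b * s) := by
  have := (Φ s).norm_mulVec_le_of_abs_le (Real.exp_pos _).le (hΦb s hs) (u (θ s ω))
  calc ‖Φ s *ᵥ u (θ s ω)‖ ≤ Fintype.card n * Real.exp (b * s) * ‖u (θ s ω)‖ := this
    _ ≤ Fintype.card n * Real.exp (b * s) * C := by gcongr; exact huC _
    _ = Fintype.card n * C * Real.exp (b * s) := by ring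

theorem norm_flowIntegral_le (hb : 0 < b)
    (hΦb : ∀ s ≤ 0, ∀ i j, |Φ s i j| ≤ Real.exp (b * s)) (huC : ∀ ω, ‖u ω‖ ≤ C) (ω : Ω) :
    ‖flowIntegral Φ θ u ω‖ ≤ Fintype.card n * C / b :=
  norm_setIntegral_Iic_le_of_norm_le_exp hb fun _ hs => norm_mulVec_flow_le hΦb huC ω hs

variable [MeasurableSpace Ω]

theorem measurable_flowIntegral (hΦ : ∀ i j, Measurable fun s => Φ s i j)
    (hθ : Measurable fun p : ℝ × Ω => θ p.1 p.2) (hu : Measurable u) :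
    Measurable (flowIntegral Φ θ u) :=
  (Measurable.matrix_mulVec (M := fun p : Ω × ℝ => Φ p.2) (fun i j => (hΦ i j).comp measurable_snd)
    (hu.comp (hθ.comp measurable_swap))).stronglyMeasurable.integral_prod_right'.measurable

theorem integrableOn_mulVec_flow (hΦ : ∀ i j, Measurable fun s => Φ s i j)
    (hθ : Measurable fun p : ℝ × Ω => θ p.1 p.2) (hb : 0 < b)
    (hΦb : ∀ s ≤ 0, ∀ i j, |Φ s i j| ≤ Real.exp (b * s)) (hu : Measurable u)
    (huC : ∀ ω, ‖u ω‖ ≤ C) (ω : Ω) : IntegrableOn (fun s => Φ s *ᵥ u (θ s ω)) (Iic 0) :=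
  integrableOn_Iic_of_norm_le_exp hb
    (Measurable.matrix_mulVec hΦ (hu.comp (hθ.comp measurable_prodMk_right))).aestronglyMeasurable
    fun _ hs => norm_mulVec_flow_le hΦb huC ω hs

theorem norm_flowIntegral_sub_le (hΦ : ∀ i j, Measurable fun s => Φ s i j)
    (hθ : Measurable fun p : ℝ × Ω => θ p.1 p.2) (hb : 0 < b)
    (hΦb : ∀ s ≤ 0, ∀ i j, |Φ s i j| ≤ Real.exp (b * s))
    (hu : Measurable u) (hu' : Memℓp u ∞) (hv : Measurable v) (hv' : Memℓp v ∞)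
    (huv : ∀ ω, ‖u ω - v ω‖ ≤ C) (ω : Ω) :
    ‖flowIntegral Φ θ u ω - flowIntegral Φ θ v ω‖ ≤ Fintype.card n * C / b := by
  obtain ⟨Cu, hCu⟩ := memℓp_infty_iff.1 hu'
  obtain ⟨Cv, hCv⟩ := memℓp_infty_iff.1 hv'
  have hsub : flowIntegral Φ θ u ω - flowIntegral Φ θ v ω = flowIntegral Φ θ (u - v) ω := by
    rw [flowIntegral, flowIntegral, ← integral_sub
      (integrableOn_mulVec_flow hΦ hθ hb hΦb hu (fun ω => hCu ⟨ω, rfl⟩) ω)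
      (integrableOn_mulVec_flow hΦ hθ hb hΦb hv (fun ω => hCv ⟨ω, rfl⟩) ω)]
    simp only [flowIntegral, Pi.sub_apply, Matrix.mulVec_sub]
  rw [hsub]
  exact norm_flowIntegral_le hb hΦb huv ω

end FlowIntegral

theorem exists_unique_measurable_memℓp_fixedPoint {Ω E : Type*} [MeasurableSpace Ω]
    [NormedAddCommGroup E] [CompleteSpace E] [MeasurableSpace E] [BorelSpace E]
    (T : (Ω → E) → Ω → E) {K : ℝ≥0} (hK : K < 1)
    (hT : ∀ u, Measurable u → Memℓp u ∞ → Measurable (T u) ∧ Memℓp (T u) ∞)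
    (hT_lip : ∀ u v, Measurable u → Memℓp u ∞ → Measurable v → Memℓp v ∞ →
      ∀ C, (∀ ω, ‖u ω - v ω‖ ≤ C) → ∀ ω, ‖T u ω - T v ω‖ ≤ K * C) :
    ∃! u, Measurable u ∧ Memℓp u ∞ ∧ T u = u := by
  let S : Set ℓ^∞(Ω, E) := {f | Measurable (f : Ω → E)}
  -- pointwise limits of measurable functions are measurable
  have hS : IsClosed S := IsSeqClosed.isClosed fun f g hf hfg =>
    measurable_of_tendsto_metrizable hf ((lp.uniformContinuous_coe.continuous.tendsto g).comp hfg)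
  have : CompleteSpace S := hS.completeSpace_coe
  have : Nonempty S := ⟨⟨0, measurable_const⟩⟩
  let T' : S → S := fun f =>
    ⟨⟨T f, (hT f f.2 (lp.memℓp f.1)).2⟩, (hT f f.2 (lp.memℓp f.1)).1⟩
  have hT' : ContractingWith K T' := by
    refine ⟨hK, LipschitzWith.of_dist_le_mul fun f g => ?_⟩
    rw [Subtype.dist_eq, Subtype.dist_eq, dist_eq_norm, dist_eq_norm]
    refine lp.norm_le_of_forall_le (by positivity) fun ω => ?_
    exact hT_lip f g f.2 (lp.memℓp f.1) g.2 (lp.memℓp g.1) _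
      (fun ω => lp.norm_apply_le_norm ENNReal.top_ne_zero (f.1 - g.1) ω) ω
  obtain ⟨⟨⟨u, hu⟩, hum⟩, hfix⟩ : ∃ f, Function.IsFixedPt T' f := ⟨_, hT'.fixedPoint_isFixedPt⟩
  refine ⟨u, ⟨hum, hu, congrArg (fun f : S => (f : Ω → E)) hfix⟩, ?_⟩
  rintro v ⟨hvm, hv, hTv⟩
  have hvfix : Function.IsFixedPt T' ⟨⟨v, hv⟩, hvm⟩ := Subtype.ext (lp.ext hTv)
  exact congrArg (fun f : S => (f : Ω → E)) (hT'.fixedPoint_unique' hvfix hfix)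

theorem exists_unique_fixedPoint_comp_flowIntegral {Ω m n : Type*} [MeasurableSpace Ω]
    [Fintype m] [DecidableEq m] [Fintype n] {Φ : ℝ → Matrix m n ℝ} {θ : ℝ → Ω → Ω}
    (hΦ : ∀ i j, Measurable fun s => Φ s i j) (hθ : Measurable fun p : ℝ × Ω => θ p.1 p.2)
    {b : ℝ} (hb : 0 < b) (hΦb : ∀ s ≤ 0, ∀ i j, |Φ s i j| ≤ Real.exp (b * s))
    {h : (m → ℝ) → n → ℝ} (hh : Differentiable ℝ h) (hh_bdd : BddAbove (range fun x => ‖h x‖))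
    {L : ℝ} (hL : 0 ≤ L) (hD : ∀ x i j, |fderiv ℝ h x (Pi.single j 1) i| ≤ L)
    (hsmall : Fintype.card m * L * Fintype.card n < b) {c : Ω → m → ℝ} (hc : Measurable c) :
    ∃! u : Ω → n → ℝ, Measurable u ∧ Memℓp u ∞ ∧ ∀ ω, u ω = h (flowIntegral Φ θ u ω + c ω) := by
  set k := Fintype.card m * L * Fintype.card n / b
  have hk : k.toNNReal < 1 := Real.toNNReal_lt_one.2 ((div_lt_one hb).2 hsmall)
  obtain ⟨u, ⟨hu, hu', hfix⟩, huniq⟩ := exists_unique_measurable_memℓp_fixedPoint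
    (fun u ω => h (flowIntegral Φ θ u ω + c ω)) hk
    (fun u hu _ => ⟨hh.continuous.measurable.comp ((measurable_flowIntegral hΦ hθ hu).add hc),
      memℓp_infty (hh_bdd.mono (range_comp_subset_range _ fun x => ‖h x‖))⟩)
    fun u v hu hu' hv hv' C huv ω => calc
      ‖h (flowIntegral Φ θ u ω + c ω) - h (flowIntegral Φ θ v ω + c ω)‖
        ≤ Fintype.card m * L * ‖flowIntegral Φ θ u ω + c ω - (flowIntegral Φ θ v ω + c ω)‖ :=
          norm_sub_le_of_abs_fderiv_apply_single_le hh hL hD _ _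
      _ = Fintype.card m * L * ‖flowIntegral Φ θ u ω - flowIntegral Φ θ v ω‖ := by
          rw [add_sub_add_right_eq_sub]
      _ ≤ Fintype.card m * L * (Fintype.card n * C / b) := by
          gcongr; exact norm_flowIntegral_sub_le hΦ hθ hb hΦb hu hu' hv hv' huv ω
      _ = k.toNNReal * C := by rw [Real.coe_toNNReal _ (by positivity)]; ring
  exact ⟨u, ⟨hu, hu', fun ω => congrFun hfix.symm ω⟩,
    fun v ⟨hv, hv', hvfix⟩ => huniq v ⟨hv, hv', funext fun ω => (hvfix ω).symm⟩⟩

theorem small_gain_unique_fixed_point_general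
    {Ω : Type*} [MeasurableSpace Ω] (θ : ℝ → Ω → Ω)
    (hθ : Measurable fun p : ℝ × Ω => θ p.1 p.2)
    {d : ℕ}
    (A : Matrix (Fin d) (Fin d) ℝ) (l : ℝ)
    (hA : ∀ t : ℝ, 0 ≤ t → ∀ i j : Fin d,
      |NormedSpace.exp (t • A) i j| ≤ Real.exp (l * t))
    (N : Fin d → ℝ) (L : ℝ) (hL : 0 ≤ L)
    (hsmall : L * (d : ℝ) ^ 2 < -l)
    (h : (Fin d → ℝ) → (Fin d → ℝ)) (hC1 : ContDiff ℝ 1 h)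
    (hD : ∀ x : Fin d → ℝ, ∀ i j : Fin d, |fderiv ℝ h x (Pi.single j 1) i| ≤ L)
    (hrange : ∀ x : Fin d → ℝ, 0 ≤ h x ∧ h x ≤ N)
    (c : Ω → (Fin d → ℝ)) (hc : Measurable c) :
    ∃! u : Ω → (Fin d → ℝ),
      Measurable u ∧ (∀ ω : Ω, 0 ≤ u ω ∧ u ω ≤ N) ∧
      ∀ ω : Ω, u ω = h ((∫ s in Set.Iic (0 : ℝ),
        (NormedSpace.exp ((-s) • A)).mulVec (u (θ s ω))) + c ω) := by
  have hb : 0 < -l := (by positivity : 0 ≤ L * (d : ℝ) ^ 2).trans_lt hsmall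
  have hΦb : ∀ s ≤ 0, ∀ i j, |NormedSpace.exp ((-s) • A) i j| ≤ Real.exp (-l * s) :=
    fun s hs i j => by simpa only [mul_neg, neg_mul] using hA (-s) (neg_nonneg.2 hs) i j
  have hbound : ∀ {x}, 0 ≤ x ∧ x ≤ N → ‖x‖ ≤ ‖N‖ := fun hx =>
    Pi.norm_le_norm_of_nonneg_of_le hx.1 hx.2
  obtain ⟨u, ⟨hu, -, hfix⟩, huniq⟩ := exists_unique_fixedPoint_comp_flowIntegral
    (fun i j => ((Matrix.continuous_exp.comp (by fun_prop)).matrix_elem i j).measurable) hθ hb hΦb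
    (hC1.differentiable one_ne_zero) ⟨‖N‖, forall_mem_range.2 fun x => hbound (hrange x)⟩ hL hD
    (by rw [Fintype.card_fin]; linarith) hc
  refine ⟨u, ⟨hu, fun ω => hfix ω ▸ hrange _, hfix⟩, fun v ⟨hv, hvN, hvfix⟩ => ?_⟩
  exact huniq v ⟨hv, memℓp_infty ⟨‖N‖, forall_mem_range.2 fun ω => hbound (hvN ω)⟩, hvfix⟩

/-- Fixed-point assertion of the paper's small-gain Theorem 4.1: under the small-gain
condition `Ld² < −λ`, the gain operator `u ↦ h(𝒦u)`, with
`(𝒦u)(ω) = ∫_{-∞}^0 exp(−sA)·u(θ_s ω) ds + c(ω)`, has a unique measurable fixed point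
`u : Ω → [0,N]`. -/
theorem small_gain_unique_fixed_point
    {Ω : Type*} [MeasurableSpace Ω] (θ : ℝ → Ω → Ω)
    (hθ : Measurable fun p : ℝ × Ω => θ p.1 p.2)
    {d : ℕ} (hd : 1 ≤ d)
    (A : Matrix (Fin d) (Fin d) ℝ) (l : ℝ) (hl : l < 0)
    (hA : ∀ t : ℝ, 0 ≤ t → ∀ i j : Fin d,
      |NormedSpace.exp (t • A) i j| ≤ Real.exp (l * t))
    (N : Fin d → ℝ) (hN : 0 ≤ N) (L : ℝ) (hL : 0 ≤ L)
    (hsmall : L * (d : ℝ) ^ 2 < -l)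
    (h : (Fin d → ℝ) → (Fin d → ℝ)) (hC1 : ContDiff ℝ 1 h)
    (hD : ∀ x : Fin d → ℝ, ∀ i j : Fin d, |fderiv ℝ h x (Pi.single j 1) i| ≤ L)
    (hrange : ∀ x : Fin d → ℝ, 0 ≤ h x ∧ h x ≤ N)
    (c : Ω → (Fin d → ℝ)) (hc : Measurable c) :
    ∃! u : Ω → (Fin d → ℝ),
      Measurable u ∧ (∀ ω : Ω, 0 ≤ u ω ∧ u ω ≤ N) ∧
      ∀ ω : Ω, u ω = h ((∫ s in Set.Iic (0 : ℝ),
        (NormedSpace.exp ((-s) • A)).mulVec (u (θ s ω))) + c ω) :=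
  small_gain_unique_fixed_point_general θ hθ A l hA N L hL hsmall h hC1 hD hrange c hc
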